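/- Let u : ℝ → ℝ be six times continuously differentiable (ContDiff ℝ 6), x ∈ ℝ, and h > 0. Then there exists ξ ∈ [x − 2h, x + 2h] such that (u(x+2h) − 4u(x+h) + 6u(x) − 4u(x−h) + u(x−2h))/h⁴ = u⁽⁴⁾(x) + (h²/6)·u⁽⁶⁾(ξ). Equivalently, the one-dimensional numerical moment satisfies δ²_{2h}u(x) − δ²_h u(x) = (h²/4)·( u⁽⁴⁾(x) + (h²/6)·u⁽⁶⁾(ξ) ). -/

import Mathlib

/-!
Write `g t = u (x + t) + u (x - t)`. Its Taylor expansion at `0` with integral remainder has no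
odd terms, and the fourth difference is `g (2h) - 4 g h + 3 g 0`, in which the terms of order
`0` and `2` cancel. What is left is `h⁴ u⁽⁴⁾(x)` plus the integral of
`u⁽⁶⁾(x + s) + u⁽⁶⁾(x - s)` against the Peano kernel `((2h - s)⁵ - 4 (h - s)₊⁵) / 120` on
`[0, 2h]`. This kernel is nonnegative with total mass `h⁶ / 12`, so the remainder is `h⁶ / 6`
times a value between the extrema of `u⁽⁶⁾` on `[x - 2h, x + 2h]`, which is attained there by the
intermediate value theorem.
-/

open Set Nat intervalIntegral

theorem taylor_integral_remainder_of_contDiff {F : Type*} [NormedAddCommGroup F]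
    [NormedSpace ℝ F] [CompleteSpace F] {f : ℝ → F} {n : ℕ} (hf : ContDiff ℝ (n + 1) f)
    (x₀ x : ℝ) :
    f x = ∑ k ∈ Finset.range (n + 1), ((x - x₀) ^ k / k !) • iteratedDeriv k f x₀
      + ∫ t in x₀..x, ((x - t) ^ n / n !) • iteratedDeriv (n + 1) f t := by
  rcases eq_or_ne x₀ x with rfl | hne
  · simp [Finset.sum_range_succ']
  have hwithin : ∀ k ≤ n + 1, EqOn (iteratedDerivWithin k f (uIcc x₀ x)) (iteratedDeriv k f)
      (uIcc x₀ x) := fun k hk t ht =>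
    iteratedDerivWithin_eq_iteratedDeriv (uniqueDiffOn_uIcc hne)
      (hf.contDiffAt.of_le (by exact_mod_cast hk)) ht
  have := taylor_integral_remainder (x₀ := x₀) (x := x) hf.contDiffOn
  rw [taylor_within_apply, intervalIntegral.integral_congr
    (fun t ht => by rw [hwithin (n + 1) le_rfl ht]), Finset.sum_congr rfl fun k hk => by
    rw [hwithin k (Finset.mem_range.mp hk).le left_mem_uIcc, ← div_eq_inv_mul]] at this
  rw [← this]
  abel

theorem iteratedDeriv_add_comp_sub {F : Type*} [NormedAddCommGroup F] [NormedSpace ℝ F]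
    {f : ℝ → F} {n : ℕ} (hf : ContDiff ℝ n f) (x t : ℝ) :
    iteratedDeriv n (fun s => f (x + s) + f (x - s)) t
      = iteratedDeriv n f (x + t) + (-1 : ℝ) ^ n • iteratedDeriv n f (x - t) := by
  rw [iteratedDeriv_fun_add (by fun_prop) (by fun_prop), iteratedDeriv_comp_const_add,
    iteratedDeriv_comp_const_sub]

theorem add_comp_sub_eq_taylor {F : Type*} [NormedAddCommGroup F] [NormedSpace ℝ F]
    [CompleteSpace F] {f : ℝ → F} {n : ℕ} (hf : ContDiff ℝ (n + 1) f) (x t : ℝ) :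
    f (x + t) + f (x - t)
      = ∑ k ∈ Finset.range (n + 1), (t ^ k / k !) • ((1 + (-1 : ℝ) ^ k) • iteratedDeriv k f x)
        + ∫ s in 0..t, ((t - s) ^ n / n !) • (iteratedDeriv (n + 1) f (x + s)
            + (-1 : ℝ) ^ (n + 1) • iteratedDeriv (n + 1) f (x - s)) := by
  have hg : ContDiff ℝ (n + 1) (fun s => f (x + s) + f (x - s)) := by fun_prop
  have := taylor_integral_remainder_of_contDiff hg 0 t
  simp only [sub_zero] at this
  rw [this]
  congr 1
  · refine Finset.sum_congr rfl fun k hk => ?_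
    rw [iteratedDeriv_add_comp_sub (hf.of_le (by exact_mod_cast (Finset.mem_range.mp hk).le)),
      add_zero, sub_zero, add_smul, one_smul]
  · refine intervalIntegral.integral_congr fun s _ => ?_
    rw [iteratedDeriv_add_comp_sub hf]

theorem add_comp_sub_eq_taylor_six {u : ℝ → ℝ} (hu : ContDiff ℝ 6 u) (x t : ℝ) :
    u (x + t) + u (x - t)
      = 2 * u x + iteratedDeriv 2 u x * t ^ 2 + iteratedDeriv 4 u x * t ^ 4 / 12
        + ∫ s in 0..t, (t - s) ^ 5 / 120 * (iteratedDeriv 6 u (x + s) + iteratedDeriv 6 u (x - s))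
      := by
  have := add_comp_sub_eq_taylor (n := 5) hu x t
  norm_num [Finset.sum_range_succ, Nat.factorial] at this
  rw [this]
  ring

theorem integral_sub_four_mul_integral_eq {w : ℝ → ℝ} (hw : Continuous w) (h : ℝ) :
    (∫ s in 0..2 * h, (2 * h - s) ^ 5 / 120 * w s) - 4 * ∫ s in 0..h, (h - s) ^ 5 / 120 * w s
      = (∫ s in 0..h, ((2 * h - s) ^ 5 - 4 * (h - s) ^ 5) / 120 * w s)
        + ∫ s in h..2 * h, (2 * h - s) ^ 5 / 120 * w s := by
  have hint : ∀ c a b : ℝ,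
      IntervalIntegrable (fun s => (c - s) ^ 5 / 120 * w s) MeasureTheory.volume a b :=
    fun c a b => Continuous.intervalIntegrable (by fun_prop) a b
  rw [← integral_add_adjacent_intervals (hint _ 0 h) (hint _ h _), ← integral_const_mul,
    add_sub_right_comm, ← integral_sub (hint _ _ _) ((hint _ _ _).const_mul 4)]
  congr 1
  refine integral_congr fun s _ => ?_
  ring

theorem integral_mul_mem_Icc {K f : ℝ → ℝ} {a b m M : ℝ} (hab : a ≤ b)
    (hK : IntervalIntegrable K MeasureTheory.volume a b)
    (hKf : IntervalIntegrable (fun s => K s * f s) MeasureTheory.volume a b)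
    (hK0 : ∀ s ∈ Icc a b, 0 ≤ K s) (hf : ∀ s ∈ Icc a b, f s ∈ Icc m M) :
    ∫ s in a..b, K s * f s ∈ Icc ((∫ s in a..b, K s) * m) ((∫ s in a..b, K s) * M) := by
  rw [← integral_mul_const, ← integral_mul_const]
  exact ⟨integral_mono_on hab (hK.mul_const m) hKf fun s hs =>
      mul_le_mul_of_nonneg_left (hf s hs).1 (hK0 s hs),
    integral_mono_on hab hKf (hK.mul_const M) fun s hs =>
      mul_le_mul_of_nonneg_left (hf s hs).2 (hK0 s hs)⟩

theorem peano_remainder_mem_Icc {w : ℝ → ℝ} (hw : Continuous w) {h m M : ℝ} (hh : 0 ≤ h)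
    (hw_mem : ∀ s ∈ Icc 0 (2 * h), w s ∈ Icc m M) :
    (∫ s in 0..h, ((2 * h - s) ^ 5 - 4 * (h - s) ^ 5) / 120 * w s)
        + ∫ s in h..2 * h, (2 * h - s) ^ 5 / 120 * w s
      ∈ Icc (h ^ 6 / 12 * m) (h ^ 6 / 12 * M) := by
  have hnear_kernel :
      ∫ s in 0..h, ((2 * h - s) ^ 5 - 4 * (h - s) ^ 5) / 120 = 59 * h ^ 6 / 720 := by
    rw [integral_div, integral_sub (Continuous.intervalIntegrable (by fun_prop) _ _)
      (Continuous.intervalIntegrable (by fun_prop) _ _), integral_const_mul]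
    simp only [integral_comp_sub_left (fun s => s ^ 5), integral_pow]
    ring
  have hfar_kernel : ∫ s in h..2 * h, (2 * h - s) ^ 5 / 120 = h ^ 6 / 720 := by
    rw [integral_div]
    simp only [integral_comp_sub_left (fun s => s ^ 5), integral_pow]
    ring
  have hnear := integral_mul_mem_Icc (K := fun s => ((2 * h - s) ^ 5 - 4 * (h - s) ^ 5) / 120) hh
    (Continuous.intervalIntegrable (by fun_prop) _ _)
    (Continuous.intervalIntegrable (by fun_prop) _ _)
    (fun s hs => by
      have h1 : (2 * (h - s)) ^ 5 ≤ (2 * h - s) ^ 5 :=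
        pow_le_pow_left₀ (by linarith [hs.2]) (by linarith [hs.1]) 5
      have h2 : 0 ≤ (h - s) ^ 5 := pow_nonneg (by linarith [hs.2]) 5
      nlinarith)
    (fun s hs => hw_mem s ⟨hs.1, by linarith [hs.2]⟩)
  have hfar := integral_mul_mem_Icc (K := fun s => (2 * h - s) ^ 5 / 120) (a := h) (b := 2 * h)
    (by linarith) (Continuous.intervalIntegrable (by fun_prop) _ _)
    (Continuous.intervalIntegrable (by fun_prop) _ _)
    (fun s hs => div_nonneg (pow_nonneg (by linarith [hs.2]) 5) (by norm_num))
    (fun s hs => hw_mem s ⟨by linarith [hs.1], hs.2⟩)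
  rw [hnear_kernel] at hnear
  rw [hfar_kernel] at hfar
  constructor <;> nlinarith [hnear.1, hnear.2, hfar.1, hfar.2]

theorem exists_fourth_difference_eq {u : ℝ → ℝ} (hu : ContDiff ℝ 6 u) (x : ℝ) {h : ℝ}
    (hh : 0 < h) :
    ∃ ξ ∈ Icc (x - 2 * h) (x + 2 * h),
      u (x + 2 * h) - 4 * u (x + h) + 6 * u x - 4 * u (x - h) + u (x - 2 * h)
        = h ^ 4 * iteratedDeriv 4 u x + h ^ 6 / 6 * iteratedDeriv 6 u ξ := by
  have hc : Continuous (iteratedDeriv 6 u) := hu.continuous_iteratedDeriv 6 le_rfl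
  obtain ⟨m, M, hmM⟩ : ∃ m M, iteratedDeriv 6 u '' Icc (x - 2 * h) (x + 2 * h) = Icc m M :=
    ⟨_, _, hc.continuousOn.image_Icc (by linarith)⟩
  have hmem : ∀ y ∈ Icc (x - 2 * h) (x + 2 * h), iteratedDeriv 6 u y ∈ Icc m M :=
    fun y hy => hmM ▸ mem_image_of_mem _ hy
  set w := fun s => iteratedDeriv 6 u (x + s) + iteratedDeriv 6 u (x - s)
  have hR := peano_remainder_mem_Icc (w := w) (by fun_prop) hh.le (m := 2 * m) (M := 2 * M)
    fun s hs => by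
      have h1 := hmem (x + s) ⟨by linarith [hs.1], by linarith [hs.2]⟩
      have h2 := hmem (x - s) ⟨by linarith [hs.2], by linarith [hs.1]⟩
      exact ⟨by linarith [h1.1, h2.1], by linarith [h1.2, h2.2]⟩
  rw [← integral_sub_four_mul_integral_eq (by fun_prop)] at hR
  set R :=
    (∫ s in 0..2 * h, (2 * h - s) ^ 5 / 120 * w s) - 4 * ∫ s in 0..h, (h - s) ^ 5 / 120 * w s
  have hL : u (x + 2 * h) - 4 * u (x + h) + 6 * u x - 4 * u (x - h) + u (x - 2 * h)
      = h ^ 4 * iteratedDeriv 4 u x + R := by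
    linear_combination add_comp_sub_eq_taylor_six hu x (2 * h)
      - 4 * add_comp_sub_eq_taylor_six hu x h
  have h6 : 0 < h ^ 6 / 6 := by positivity
  obtain ⟨ξ, hξ, hξR⟩ : R / (h ^ 6 / 6) ∈ iteratedDeriv 6 u '' Icc (x - 2 * h) (x + 2 * h) := by
    rw [hmM]
    exact ⟨(le_div_iff₀ h6).2 (by linarith [hR.1]), (div_le_iff₀ h6).2 (by linarith [hR.2])⟩
  refine ⟨ξ, hξ, ?_⟩
  rw [hL, hξR]
  field_simp

theorem numerical_moment_taylor
    (u : ℝ → ℝ) (hu : ContDiff ℝ 6 u) (x h : ℝ) (hh : 0 < h) :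
    ∃ ξ ∈ Set.Icc (x - 2 * h) (x + 2 * h),
      (u (x + 2 * h) - 4 * u (x + h) + 6 * u x - 4 * u (x - h) + u (x - 2 * h)) / h ^ 4
        = iteratedDeriv 4 u x + h ^ 2 / 6 * iteratedDeriv 6 u ξ ∧
      (u (x + 2 * h) - 2 * u x + u (x - 2 * h)) / (4 * h ^ 2)
          - (u (x + h) - 2 * u x + u (x - h)) / h ^ 2
        = h ^ 2 / 4 * (iteratedDeriv 4 u x + h ^ 2 / 6 * iteratedDeriv 6 u ξ) := by
  obtain ⟨ξ, hξ, hL⟩ := exists_fourth_difference_eq hu x hh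
  have hfourth : (u (x + 2 * h) - 4 * u (x + h) + 6 * u x - 4 * u (x - h) + u (x - 2 * h)) / h ^ 4
      = iteratedDeriv 4 u x + h ^ 2 / 6 * iteratedDeriv 6 u ξ := by
    rw [hL]
    field_simp
  refine ⟨ξ, hξ, hfourth, ?_⟩
  rw [← hfourth]
  field_simp
  ring
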